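/- arXiv:1612.08130 — 6 statements merged into one kernel-verified Lean document; each statement's English description precedes it below -/
import Mathlib

section
/- Let S be a downwards-closed subtree of Ω having uncountably many infinite branches, and let Σ_S : ℓ¹(S) → ℓ∞(S) be the unique bounded linear operator with (Σ_S e_s)(t) = 1 if s ⊑ t and 0 otherwise. Then the range of the adjoint Σ_S* : (ℓ∞(S))* → (ℓ¹(S))* is not separable; in particular, Σ_S is not an Asplund operator. -/
/-!
For an infinite branch `b` of `S`, the limit of `x (b|n)` along a free ultrafilter on `ℕ` is a
norm-one functional `φ_b` on `ℓ∞(S)`, and `φ_b (Σ_S e_s)` is `1` if `s` is an initial segment of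
`b` and `0` otherwise. Two distinct branches `b, b'` first differ at some index `k`, and testing
on `e_s` with `s = b|(k+1)` shows `‖φ_b ∘ Σ_S - φ_b' ∘ Σ_S‖ ≥ 1`, even after restricting to the
closed span `Z` of the `e_s`. An uncountable `1`-separated family lies in no separable set, and `Z`
is separable, so both the range of `Σ_S*` and that of `(Σ_S ∘ ι_Z)*` are non-separable.
-/

open TopologicalSpace

/-- A downwards-closed subtree of the tree `Ω` of finite sequences of naturals. -/
def IsDownwardsClosedSubtree (S : Set (List ℕ)) : Prop :=
  ∀ t ∈ S, ∀ s : List ℕ, s <+: t → s ∈ S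

/-- `b : ℕ → ℕ` is an infinite branch of `S` if all its finite initial segments lie in `S`. -/
def IsBranch (S : Set (List ℕ)) (b : ℕ → ℕ) : Prop :=
  ∀ n : ℕ, (List.ofFn fun i : Fin n => b i) ∈ S

/-- `T` is an Asplund operator if for every separable closed subspace `Z` of its domain,
the adjoint of the restriction `T ∘ ι_Z` has separable range in `Z*`. -/
def IsAsplundOperator {X Y : Type*} [NormedAddCommGroup X] [NormedSpace ℝ X]
    [NormedAddCommGroup Y] [NormedSpace ℝ Y] (T : X →L[ℝ] Y) : Prop :=
  ∀ Z : Submodule ℝ X, IsClosed (Z : Set X) → SeparableSpace ↥Z →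
    TopologicalSpace.IsSeparable
      (Set.range fun g : StrongDual ℝ Y => g.comp (T.comp Z.subtypeL))

open Filter Topology

theorem not_isSeparable_of_pairwise_le_dist {E ι : Type*} [PseudoMetricSpace E] [Uncountable ι]
    {s : Set E} {f : ι → E} (hfs : ∀ i, f i ∈ s) {ε : ℝ} (hε : 0 < ε)
    (hf : Pairwise fun i j => ε ≤ dist (f i) (f j)) : ¬ IsSeparable s := by
  intro hs
  have := hs.separableSpace
  refine not_countable (α := ι) (Pairwise.countable_of_isOpen_disjoint
    (s := fun i => Metric.ball (⟨f i, hfs i⟩ : s) (ε / 2)) (fun i j hij => ?_)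
    (fun _ => Metric.isOpen_ball) (fun _ => Metric.nonempty_ball.2 (half_pos hε)))
  exact Metric.ball_disjoint_ball (by simpa [Subtype.dist_eq] using hf hij)

section UltrafilterLimit

variable {ι α : Type*} (U : Ultrafilter ι) (f : ι → α)

theorem exists_tendsto_ultrafilter_lp_top (x : lp (fun _ : α => ℝ) ⊤) :
    ∃ l, Tendsto (fun i => x (f i)) U (𝓝 l) := by
  have hx : ∀ i, x (f i) ∈ Set.Icc (-‖x‖) ‖x‖ := fun i =>
    abs_le.1 (lp.norm_apply_le_norm ENNReal.top_ne_zero x (f i))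
  obtain ⟨l, -, hl⟩ := isCompact_Icc.ultrafilter_le_nhds (U.map fun i => x (f i))
    (by rw [Ultrafilter.coe_map, le_principal_iff, mem_map]; exact univ_mem' hx)
  exact ⟨l, hl⟩

noncomputable def ultrafilterLimDual : StrongDual ℝ (lp (fun _ : α => ℝ) ⊤) :=
  LinearMap.mkContinuous
    { toFun := fun x => limUnder (U : Filter ι) fun i => x (f i)
      map_add' := fun x y => tendsto_nhds_unique
        (tendsto_nhds_limUnder (exists_tendsto_ultrafilter_lp_top U f (x + y)))
        ((tendsto_nhds_limUnder (exists_tendsto_ultrafilter_lp_top U f x)).add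
          (tendsto_nhds_limUnder (exists_tendsto_ultrafilter_lp_top U f y)))
      map_smul' := fun c x => tendsto_nhds_unique
        (tendsto_nhds_limUnder (exists_tendsto_ultrafilter_lp_top U f (c • x)))
        ((tendsto_nhds_limUnder (exists_tendsto_ultrafilter_lp_top U f x)).const_mul c) }
    1 fun x => by
      rw [one_mul]
      exact le_of_tendsto'
        (tendsto_nhds_limUnder (exists_tendsto_ultrafilter_lp_top U f x)).norm
        fun i => lp.norm_apply_le_norm ENNReal.top_ne_zero x (f i)

theorem tendsto_ultrafilterLimDual (x : lp (fun _ : α => ℝ) ⊤) :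
    Tendsto (fun i => x (f i)) U (𝓝 (ultrafilterLimDual U f x)) :=
  tendsto_nhds_limUnder (exists_tendsto_ultrafilter_lp_top U f x)

theorem ultrafilterLimDual_eq_of_eventually {x : lp (fun _ : α => ℝ) ⊤} {c : ℝ}
    (h : ∀ᶠ i in U, x (f i) = c) : ultrafilterLimDual U f x = c :=
  tendsto_nhds_unique (tendsto_ultrafilterLimDual U f x)
    (tendsto_const_nhds.congr' (h.mono fun _ hi => hi.symm))

end UltrafilterLimit

def branchPrefix (b : ℕ → ℕ) (n : ℕ) : List ℕ := List.ofFn fun i : Fin n => b i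

theorem length_branchPrefix (b : ℕ → ℕ) (n : ℕ) : (branchPrefix b n).length = n :=
  List.length_ofFn

theorem take_branchPrefix (b : ℕ → ℕ) {m n : ℕ} (h : m ≤ n) :
    (branchPrefix b n).take m = branchPrefix b m :=
  List.ext_getElem (by simp [branchPrefix, h]) fun _ _ _ => by simp [branchPrefix]

theorem prefix_branchPrefix_iff {b : ℕ → ℕ} {s : List ℕ} {n : ℕ} :
    s <+: branchPrefix b n ↔ s.length ≤ n ∧ s = branchPrefix b s.length := by
  constructor
  · intro h
    have hlen : s.length ≤ n := length_branchPrefix b n ▸ h.length_le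
    exact ⟨hlen, (List.prefix_iff_eq_take.1 h).trans (take_branchPrefix b hlen)⟩
  · rintro ⟨hlen, hs⟩
    rw [hs, ← take_branchPrefix b hlen]
    exact List.take_prefix _ _

theorem apply_eq_of_branchPrefix_succ_eq {b b' : ℕ → ℕ} {k : ℕ}
    (h : branchPrefix b (k + 1) = branchPrefix b' (k + 1)) : b k = b' k :=
  congrFun (List.ofFn_inj.1 h) (Fin.last k)

section BranchFunctional

variable {S : Set (List ℕ)}

noncomputable def branchFunctional (b : ℕ → ℕ) (hb : IsBranch S b) :
    StrongDual ℝ (lp (fun _ : ↥S => ℝ) ⊤) :=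
  ultrafilterLimDual (Ultrafilter.of atTop) fun n => ⟨branchPrefix b n, hb n⟩

variable {Sig : lp (fun _ : ↥S => ℝ) 1 →L[ℝ] lp (fun _ : ↥S => ℝ) ⊤}
  (hSig : ∀ s t : ↥S,
    (Sig (lp.single 1 s (1 : ℝ)) : ∀ _ : ↥S, ℝ) t =
      if (s : List ℕ) <+: (t : List ℕ) then 1 else 0)
include hSig

theorem branchFunctional_apply_single {b : ℕ → ℕ} (hb : IsBranch S b) (s : ↥S) :
    branchFunctional b hb (Sig (lp.single 1 s 1)) =
      if (s : List ℕ) = branchPrefix b (s : List ℕ).length then 1 else 0 := by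
  apply ultrafilterLimDual_eq_of_eventually
  have hlarge : ∀ᶠ n in (Ultrafilter.of (atTop : Filter ℕ) : Filter ℕ),
      (s : List ℕ).length ≤ n :=
    Ultrafilter.of_le atTop (eventually_ge_atTop _)
  filter_upwards [hlarge] with n hn
  simp only [hSig, prefix_branchPrefix_iff, hn, true_and]

theorem one_le_norm_branchFunctional_sub {Z : Submodule ℝ (lp (fun _ : ↥S => ℝ) 1)}
    (hZ : ∀ s : ↥S, lp.single 1 s (1 : ℝ) ∈ Z) {b b' : ℕ → ℕ} (hb : IsBranch S b)
    (hb' : IsBranch S b') (hne : b ≠ b') :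
    1 ≤ ‖(branchFunctional b hb).comp (Sig.comp Z.subtypeL) -
      (branchFunctional b' hb').comp (Sig.comp Z.subtypeL)‖ := by
  obtain ⟨k, hk⟩ := Function.ne_iff.1 hne
  let s : ↥S := ⟨branchPrefix b (k + 1), hb (k + 1)⟩
  have hs : ‖(⟨lp.single 1 s 1, hZ s⟩ : Z)‖ ≤ 1 := by
    simp [lp.norm_single]
  have h₁ : branchFunctional b hb (Sig (lp.single 1 s 1)) = 1 := by
    simp [branchFunctional_apply_single hSig, s, length_branchPrefix]
  have h₀ : branchFunctional b' hb' (Sig (lp.single 1 s 1)) = 0 := by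
    rw [branchFunctional_apply_single hSig, if_neg]
    simpa [s, length_branchPrefix] using mt apply_eq_of_branchPrefix_succ_eq hk
  simpa [h₁, h₀] using ((branchFunctional b hb).comp (Sig.comp Z.subtypeL) -
      (branchFunctional b' hb').comp (Sig.comp Z.subtypeL)).unit_le_opNorm _ hs

theorem not_isSeparable_range_comp_subtypeL (hbr : ¬ {b : ℕ → ℕ | IsBranch S b}.Countable)
    {Z : Submodule ℝ (lp (fun _ : ↥S => ℝ) 1)} (hZ : ∀ s : ↥S, lp.single 1 s (1 : ℝ) ∈ Z) :
    ¬ IsSeparable (Set.range fun g : StrongDual ℝ (lp (fun _ : ↥S => ℝ) ⊤) =>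
      g.comp (Sig.comp Z.subtypeL)) := by
  have : Uncountable {b | IsBranch S b} := not_countable_iff.1 hbr
  refine not_isSeparable_of_pairwise_le_dist
    (f := fun b : {b | IsBranch S b} => (branchFunctional b.1 b.2).comp (Sig.comp Z.subtypeL))
    (fun _ => Set.mem_range_self _) one_pos fun b b' hne => ?_
  exact (one_le_norm_branchFunctional_sub hSig hZ b.2 b'.2 (Subtype.coe_ne_coe.2 hne)).trans_eq
    (dist_eq_norm (E := StrongDual ℝ Z) _ _).symm

end BranchFunctional

theorem stmt6_general (S : Set (List ℕ))
    (hbr : ¬ {b : ℕ → ℕ | IsBranch S b}.Countable)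
    (Sig : lp (fun _ : ↥S => ℝ) 1 →L[ℝ] lp (fun _ : ↥S => ℝ) ⊤)
    (hSig : ∀ s t : ↥S,
      (Sig (lp.single 1 s (1 : ℝ)) : ∀ _ : ↥S, ℝ) t =
        if (s : List ℕ) <+: (t : List ℕ) then 1 else 0) :
    ¬ TopologicalSpace.IsSeparable
        (Set.range fun g : StrongDual ℝ (lp (fun _ : ↥S => ℝ) ⊤) => g.comp Sig) ∧
      ¬ IsAsplundOperator Sig := by
  let Z := (Submodule.span ℝ (Set.range fun s : ↥S => lp.single 1 s (1 : ℝ))).topologicalClosure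
  have hZ : ∀ s : ↥S, lp.single 1 s (1 : ℝ) ∈ Z := fun s =>
    Submodule.le_topologicalClosure _ (Submodule.subset_span (Set.mem_range_self s))
  have hZsep : SeparableSpace Z := by
    refine IsSeparable.separableSpace ?_
    rw [Submodule.topologicalClosure_coe]
    exact (Set.countable_range _).isSeparable.span.closure
  have hnonsep := not_isSeparable_range_comp_subtypeL hSig hbr hZ
  refine ⟨fun hsep => hnonsep ?_,
    fun hAsp => hnonsep (hAsp Z (Submodule.isClosed_topologicalClosure _) hZsep)⟩
  refine (hsep.image (ContinuousLinearMap.precomp ℝ Z.subtypeL).continuous).mono ?_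
  rintro _ ⟨g, rfl⟩
  exact ⟨g.comp Sig, Set.mem_range_self g, ContinuousLinearMap.comp_assoc _ _ _⟩

theorem stmt6 (S : Set (List ℕ)) (hS : IsDownwardsClosedSubtree S)
    (hbr : ¬ {b : ℕ → ℕ | IsBranch S b}.Countable)
    (Sig : lp (fun _ : ↥S => ℝ) 1 →L[ℝ] lp (fun _ : ↥S => ℝ) ⊤)
    (hSig : ∀ s t : ↥S,
      (Sig (lp.single 1 s (1 : ℝ)) : ∀ _ : ↥S, ℝ) t =
        if (s : List ℕ) <+: (t : List ℕ) then 1 else 0) :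
    ¬ TopologicalSpace.IsSeparable
        (Set.range fun g : StrongDual ℝ (lp (fun _ : ↥S => ℝ) ⊤) => g.comp Sig) ∧
      ¬ IsAsplundOperator Sig :=
  stmt6_general S hbr Sig hSig
end

section
/- Let X and Y be real Banach spaces with Y separable, and let T : X → Y be a bounded linear operator. Then T is an Asplund operator if and only if T*(Y*) is separable. (That is, the class of non-Asplund operators with separable codomain coincides with the class of operators with separable codomain whose adjoint has non-separable range.) -/
/-!
Restricting functionals to a closed subspace `Z` is continuous and maps the range of `T*` onto
the range of `(T ∘ ι_Z)*`, so separability of the latter follows from that of the former.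
Conversely, since `Y` is separable, `T` maps a countable subset of the unit ball of `X` onto a
dense subset of the image of the unit ball; its closed span `Z` is separable and norming for
every `g ∘ T`, so restriction to `Z` is isometric on the range of `T*` and pulls separability
back.
-/

open TopologicalSpace Metric

lemma exists_countable_subset_image_subset_closure {α β : Type*} [TopologicalSpace β]
    [PseudoMetrizableSpace β] [SeparableSpace β] (f : α → β) (s : Set α) :
    ∃ c ⊆ s, c.Countable ∧ f '' s ⊆ closure (f '' c) := by
  obtain ⟨t, hts, htc, hst⟩ :=
    (IsSeparable.of_separableSpace (f '' s)).exists_countable_dense_subset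
  obtain ⟨u, hus, rfl⟩ := Set.subset_image_iff.1 hts
  obtain ⟨c, hcu, hc⟩ := Set.exists_subset_bijOn u f
  rw [← hc.image_eq] at htc hst
  exact ⟨c, hcu.trans hus, Set.countable_of_injective_of_countable_image hc.injOn htc, hst⟩

lemma TopologicalSpace.IsSeparable.of_image_of_dist_eq {α β : Type*} [PseudoMetricSpace α]
    [PseudoMetricSpace β] {f : α → β} {s : Set α}
    (hf : ∀ a ∈ s, ∀ b ∈ s, dist (f a) (f b) = dist a b) (hs : IsSeparable (f '' s)) :
    IsSeparable s := by
  have := hs.secondCountableTopology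
  have hiso : Isometry (s.imageFactorization f) :=
    Isometry.of_dist_eq fun a b => hf a a.2 b b.2
  have := hiso.isUniformInducing.isInducing.secondCountableTopology
  exact .of_subtype s

namespace ContinuousLinearMap

variable {W X Y F : Type*} [NormedAddCommGroup W] [NormedSpace ℝ W] [NormedAddCommGroup X]
  [NormedSpace ℝ X] [NormedAddCommGroup Y] [NormedSpace ℝ Y] [NormedAddCommGroup F]
  [NormedSpace ℝ F]

lemma range_comp_comp_eq_image (T : X →L[ℝ] Y) (L : W →L[ℝ] X) :
    (Set.range fun g : Y →L[ℝ] F => g.comp (T.comp L)) =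
      (fun f : X →L[ℝ] F => f.comp L) '' Set.range fun g : Y →L[ℝ] F => g.comp T := by
  rw [← Set.range_comp]
  rfl

lemma norm_comp_comp_subtypeL_eq {T : X →L[ℝ] Y} {Z : Submodule ℝ X}
    (hZ : T '' closedBall 0 1 ⊆ closure (T '' (Z ∩ closedBall 0 1))) (g : Y →L[ℝ] F) :
    ‖(g.comp T).comp Z.subtypeL‖ = ‖g.comp T‖ := by
  refine le_antisymm ((opNorm_comp_le _ _).trans
    (mul_le_of_le_one_right (norm_nonneg _) (Submodule.norm_subtypeL_le Z))) ?_
  set gTZ := (g.comp T).comp Z.subtypeL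
  have hZM : T '' (Z ∩ closedBall 0 1) ⊆ {y | ‖g y‖ ≤ ‖gTZ‖} := by
    rintro _ ⟨x, ⟨hxZ, hx⟩, rfl⟩
    exact gTZ.unit_le_opNorm ⟨x, hxZ⟩ (mem_closedBall_zero_iff.1 hx)
  have hM := closure_minimal hZM (isClosed_le (by fun_prop) continuous_const)
  exact opNorm_le_of_unit_norm (opNorm_nonneg _) fun x hx =>
    hM (hZ ⟨x, mem_closedBall_zero_iff.2 hx.le, rfl⟩)

lemma dist_comp_comp_subtypeL_eq {T : X →L[ℝ] Y} {Z : Submodule ℝ X}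
    (hZ : T '' closedBall 0 1 ⊆ closure (T '' (Z ∩ closedBall 0 1))) (g g' : Y →L[ℝ] F) :
    dist ((g.comp T).comp Z.subtypeL) ((g'.comp T).comp Z.subtypeL) =
      dist (g.comp T) (g'.comp T) := by
  have h := norm_comp_comp_subtypeL_eq hZ (g - g')
  rw [sub_comp, sub_comp] at h
  -- `rw [dist_eq_norm]` does not fire here: the instances on `Z →L[ℝ] F` coming from
  -- `Z.subtypeL` agree with the normed ones only up to unfolding
  exact (dist_eq_norm ((g.comp T).comp Z.subtypeL) _).trans (h.trans (dist_eq_norm _ _).symm)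

lemma exists_separable_closed_submodule_image_closedBall_subset [SeparableSpace Y]
    (T : X →L[ℝ] Y) :
    ∃ Z : Submodule ℝ X, IsClosed (Z : Set X) ∧ SeparableSpace Z ∧
      T '' closedBall 0 1 ⊆ closure (T '' (Z ∩ closedBall 0 1)) := by
  obtain ⟨c, hcB, hcc, hc⟩ := exists_countable_subset_image_subset_closure T (closedBall 0 1)
  set Z := (Submodule.span ℝ c).topologicalClosure
  have hcZ : c ⊆ Z := Submodule.subset_span.trans (Submodule.le_topologicalClosure _)
  refine ⟨Z, Submodule.isClosed_topologicalClosure _, ?_,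
    hc.trans (closure_mono (Set.image_mono (Set.subset_inter hcZ hcB)))⟩
  refine IsSeparable.separableSpace ?_
  rw [Submodule.topologicalClosure_coe]
  exact hcc.isSeparable.span.closure

end ContinuousLinearMap

theorem stmt7_general (X Y : Type*) [NormedAddCommGroup X] [NormedSpace ℝ X]
    [NormedAddCommGroup Y] [NormedSpace ℝ Y] [SeparableSpace Y]
    (T : X →L[ℝ] Y) :
    IsAsplundOperator T ↔
      TopologicalSpace.IsSeparable
        (Set.range fun g : StrongDual ℝ Y => g.comp T) := by
  constructor
  · intro hT
    obtain ⟨Z, hZc, hZs, hZ⟩ := T.exists_separable_closed_submodule_image_closedBall_subset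
    have hsep := hT Z hZc hZs
    rw [ContinuousLinearMap.range_comp_comp_eq_image] at hsep
    refine IsSeparable.of_image_of_dist_eq ?_ (β := StrongDual ℝ Z) hsep
    rintro _ ⟨g, rfl⟩ _ ⟨g', rfl⟩
    exact ContinuousLinearMap.dist_comp_comp_subtypeL_eq hZ g g'
  · intro hT Z _ _
    rw [ContinuousLinearMap.range_comp_comp_eq_image]
    exact hT.image (continuous_id.clm_comp continuous_const)

theorem stmt7 (X Y : Type*) [NormedAddCommGroup X] [NormedSpace ℝ X] [CompleteSpace X]
    [NormedAddCommGroup Y] [NormedSpace ℝ Y] [CompleteSpace Y] [SeparableSpace Y]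
    (T : X →L[ℝ] Y) :
    IsAsplundOperator T ↔
      TopologicalSpace.IsSeparable
        (Set.range fun g : StrongDual ℝ Y => g.comp T) :=
  stmt7_general X Y T
end

section
/- Let S : ℓ¹(List Bool) → C(ℕ → Bool, ℝ) be the unique bounded linear operator with S e_t = χ_{Δ_t} for every t ∈ List Bool. Then for any two distinct points s, s' of Cantor space, ‖S*φ_s − S*φ_{s'}‖ ≥ 1; consequently {S*φ_s : s ∈ ℕ → Bool} is an uncountable 1/2-separated subset of (ℓ¹(List Bool))* and the range of the adjoint S* is not separable. -/
open TopologicalSpace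

/-- The indicator function `χ_{Δ_t}` of the clopen cylinder
`Δ_t = {s : ℕ → Bool | ∀ i < t.length, s i = t.get i}`, as a continuous function on
Cantor space. -/
noncomputable def cylIndicator (t : List Bool) : C(ℕ → Bool, ℝ) where
  toFun s := if ∀ i : Fin t.length, s i = t.get i then 1 else 0
  continuous_toFun := by
    have h1 : Continuous fun s : ℕ → Bool => fun i : Fin t.length => s i :=
      continuous_pi fun i => continuous_apply _
    have h2 : Continuous fun g : Fin t.length → Bool =>
        if ∀ i : Fin t.length, g i = t.get i then (1 : ℝ) else 0 :=
      continuous_of_discreteTopology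
    exact h2.comp h1

lemma not_countable_cantor : ¬ Countable (ℕ → Bool) := by
  intro h
  have e : Set ℕ ≃ (ℕ → Bool) := Equiv.arrowCongr (Equiv.refl ℕ) Equiv.propEquivBool
  have : Countable (Set ℕ) := Countable.of_equiv _ e.symm
  obtain ⟨f, hf⟩ := (countable_iff_exists_injective (Set ℕ)).mp this
  obtain ⟨g, hg⟩ := Denumerable.eqv ℕ |>.symm |>.injective |> fun _ => (⟨fun x => (Denumerable.eqv ℕ).symm (f x), fun a b hab => hf ((Denumerable.eqv ℕ).symm.injective hab)⟩ : {g : Set ℕ → ℕ // Function.Injective g})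
  exact Function.cantor_injective g hg

theorem stmt9 (S : lp (fun _ : List Bool => ℝ) 1 →L[ℝ] C(ℕ → Bool, ℝ))
    (hS : ∀ t : List Bool, S (lp.single 1 t (1 : ℝ)) = cylIndicator t) :
    (∀ s s' : ℕ → Bool, s ≠ s' →
      1 ≤ ‖(ContinuousMap.evalCLM ℝ s).comp S - (ContinuousMap.evalCLM ℝ s').comp S‖) ∧
    (¬ (Set.range fun s : ℕ → Bool => (ContinuousMap.evalCLM ℝ s).comp S).Countable ∧
      ∀ x ∈ (Set.range fun s : ℕ → Bool => (ContinuousMap.evalCLM ℝ s).comp S),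
        ∀ y ∈ (Set.range fun s : ℕ → Bool => (ContinuousMap.evalCLM ℝ s).comp S),
          x ≠ y → (1 : ℝ) / 2 < ‖x - y‖) ∧
    ¬ TopologicalSpace.IsSeparable
      (Set.range fun g : StrongDual ℝ C(ℕ → Bool, ℝ) => g.comp S) := by
  set φ : (ℕ → Bool) → (lp (fun _ : List Bool => ℝ) 1 →L[ℝ] ℝ) :=
    fun s => (ContinuousMap.evalCLM ℝ s).comp S with hφ
  -- key separation estimate
  have key : ∀ s s' : ℕ → Bool, s ≠ s' → 1 ≤ ‖φ s - φ s'‖ := by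
    intro s s' hne
    obtain ⟨n, hn⟩ : ∃ n, s n ≠ s' n := by
      by_contra h
      push_neg at h
      exact hne (funext h)
    set t : List Bool := List.ofFn (fun i : Fin (n + 1) => s i) with ht
    have hlen : t.length = n + 1 := by simp [ht]
    have hget : ∀ i : Fin t.length, t.get i = s i := by
      intro i
      exact List.get_ofFn _ i
    have hval_s : cylIndicator t s = 1 := by
      simp only [cylIndicator, ContinuousMap.coe_mk]
      rw [if_pos]
      intro i; rw [hget i]
    have hval_s' : cylIndicator t s' = 0 := by
      simp only [cylIndicator, ContinuousMap.coe_mk]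
      rw [if_neg]
      intro h
      have hn' : n < t.length := by omega
      have := h ⟨n, hn'⟩
      rw [hget ⟨n, hn'⟩] at this
      exact hn this.symm
    have hnorm1 : ‖lp.single (E := fun _ : List Bool => ℝ) 1 t (1 : ℝ)‖ = 1 := by
      have := lp.norm_single (p := (1 : ENNReal)) (E := fun _ : List Bool => ℝ)
        (by norm_num) t (1 : ℝ)
      simpa using this
    have happ : (φ s - φ s') (lp.single 1 t (1 : ℝ)) = 1 := by
      simp only [hφ, ContinuousLinearMap.sub_apply, ContinuousLinearMap.comp_apply, hS t]
      simp [ContinuousMap.evalCLM, hval_s, hval_s']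
    calc (1 : ℝ) = ‖(φ s - φ s') (lp.single 1 t (1 : ℝ))‖ := by rw [happ]; simp
      _ ≤ ‖φ s - φ s'‖ * ‖lp.single (E := fun _ : List Bool => ℝ) 1 t (1 : ℝ)‖ :=
          (φ s - φ s').le_opNorm _
      _ = ‖φ s - φ s'‖ := by rw [hnorm1, mul_one]
  have hinj : Function.Injective φ := by
    intro s s' h
    by_contra hne
    have := key s s' hne
    rw [h, sub_self, norm_zero] at this
    linarith
  have huncount : ¬ (Set.range φ).Countable := by
    intro hc
    have : (φ ⁻¹' Set.range φ).Countable := hc.preimage hinj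
    rw [Set.preimage_range] at this
    exact not_countable_cantor (Set.countable_univ_iff.mp this)
  refine ⟨key, ⟨huncount, ?_⟩, ?_⟩
  · rintro x ⟨s, rfl⟩ y ⟨s', rfl⟩ hne
    have hne' : s ≠ s' := fun h => hne (by rw [h])
    have := key s s' hne'
    linarith
  · intro hsep
    have hsub : Set.range φ ⊆
        Set.range fun g : StrongDual ℝ C(ℕ → Bool, ℝ) => g.comp S := by
      rintro _ ⟨s, rfl⟩
      exact ⟨ContinuousMap.evalCLM ℝ s, rfl⟩
    have hsep' : IsSeparable (Set.range φ) := hsep.mono hsub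
    obtain ⟨c, hc, hcl⟩ := hsep'
    -- choose for each s an element of c within distance 1/2
    have hchoice : ∀ s : ℕ → Bool, ∃ b ∈ c, dist (φ s) b < 1 / 2 := by
      intro s
      have : φ s ∈ closure c := hcl ⟨s, rfl⟩
      exact Metric.mem_closure_iff.mp this (1 / 2) (by norm_num)
    choose f hf hfd using hchoice
    have hfinj : Function.Injective f := by
      intro s s' h
      by_contra hne
      have h1 := key s s' hne
      have : dist (φ s) (φ s') ≤ dist (φ s) (f s) + dist (f s') (φ s') := by
        rw [h]; exact dist_triangle _ _ _
      rw [dist_comm (f s') (φ s')] at this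
      have hd : dist (φ s) (φ s') < 1 := by
        have := hfd s; have := hfd s'; linarith
      rw [dist_eq_norm] at hd
      linarith
    have : (Set.range f).Countable := hc.mono (Set.range_subset_iff.mpr hf)
    have : (f ⁻¹' Set.range f).Countable := this.preimage hfinj
    rw [Set.preimage_range] at this
    exact not_countable_cantor (Set.countable_univ_iff.mp this)
end

section
/- Let J : ℓ¹(Option (List Bool)) → C(ℕ → Bool, ℝ) be the unique bounded linear operator with J e_none = 1 (the constant function 1) and J e_(some t) = χ_{Δ_{t ++ [false]}} − χ_{Δ_{t ++ [true]}} for every t ∈ List Bool. Then for any two distinct points s₀, s₁ of Cantor space, ‖J*φ_{s₀} − J*φ_{s₁}‖ ≥ 2; consequently {J*φ_s : s ∈ ℕ → Bool} is an uncountable 1-separated subset of (ℓ¹(Option (List Bool)))* and the range of the adjoint J* is not separable. -/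
open TopologicalSpace

/-- The Haar system on Cantor space, indexed by `Option (List Bool)`: `none` corresponds to
the constant function `1` and `some t` to `χ_{Δ_{t ++ [false]}} - χ_{Δ_{t ++ [true]}}`. -/
noncomputable def haar : Option (List Bool) → C(ℕ → Bool, ℝ)
  | none => 1
  | some t => cylIndicator (t ++ [false]) - cylIndicator (t ++ [true])

lemma cyl_apply (t : List Bool) (b : Bool) (s : ℕ → Bool)
    (hpre : ∀ i (hi : i < t.length), s i = t.get ⟨i, hi⟩) :
    cylIndicator (t ++ [b]) s = if s t.length = b then 1 else 0 := by
  have key : (∀ i : Fin (t ++ [b]).length, s i = (t ++ [b]).get i) ↔ s t.length = b := by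
    constructor
    · intro h
      have := h ⟨t.length, by simp⟩
      simpa [List.get_eq_getElem, List.getElem_append] using this
    · intro hb i
      rcases lt_or_ge (i : ℕ) t.length with hi | hi
      · have := hpre i hi
        simp [List.get_eq_getElem, List.getElem_append, hi] at this ⊢
        exact this
      · have hlen : (i : ℕ) < t.length + 1 := by simpa using i.2
        have : (i : ℕ) = t.length := by omega
        simp [List.get_eq_getElem, List.getElem_append, this, hb]
  show (if ∀ i : Fin (t ++ [b]).length, s i = (t ++ [b]).get i then (1:ℝ) else 0) = _
  exact if_congr key rfl rfl

theorem stmt11 (J : lp (fun _ : Option (List Bool) => ℝ) 1 →L[ℝ] C(ℕ → Bool, ℝ))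
    (hJ : ∀ i : Option (List Bool), J (lp.single 1 i (1 : ℝ)) = haar i) :
    (∀ s₀ s₁ : ℕ → Bool, s₀ ≠ s₁ →
      2 ≤ ‖(ContinuousMap.evalCLM ℝ s₀).comp J - (ContinuousMap.evalCLM ℝ s₁).comp J‖) ∧
    (¬ (Set.range fun s : ℕ → Bool => (ContinuousMap.evalCLM ℝ s).comp J).Countable ∧
      ∀ x ∈ (Set.range fun s : ℕ → Bool => (ContinuousMap.evalCLM ℝ s).comp J),
        ∀ y ∈ (Set.range fun s : ℕ → Bool => (ContinuousMap.evalCLM ℝ s).comp J),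
          x ≠ y → (1 : ℝ) < ‖x - y‖) ∧
    ¬ TopologicalSpace.IsSeparable
      (Set.range fun g : StrongDual ℝ C(ℕ → Bool, ℝ) => g.comp J) := by
  classical
  set F : (ℕ → Bool) → (lp (fun _ : Option (List Bool) => ℝ) 1 →L[ℝ] ℝ) :=
    fun s => (ContinuousMap.evalCLM ℝ s).comp J with hF
  have main : ∀ s₀ s₁ : ℕ → Bool, s₀ ≠ s₁ → 2 ≤ ‖F s₀ - F s₁‖ := by
    intro s₀ s₁ hne
    have hex : ∃ n, s₀ n ≠ s₁ n := by
      by_contra hc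
      push_neg at hc
      exact hne (funext hc)
    set n := Nat.find hex with hn_def
    have hn : s₀ n ≠ s₁ n := Nat.find_spec hex
    have hmin : ∀ i < n, s₀ i = s₁ i := fun i hi => not_not.mp (Nat.find_min hex hi)
    set t : List Bool := List.ofFn (fun i : Fin n => s₀ i) with ht
    have htlen : t.length = n := by simp [ht]
    have hget : ∀ i (hi : i < t.length), t.get ⟨i, hi⟩ = s₀ i := by
      intro i hi
      simp [ht]
    have haar_eval : ∀ s : ℕ → Bool, (∀ i < n, s i = s₀ i) →
        haar (some t) s = if s n = false then 1 else -1 := by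
      intro s hs
      have hpre : ∀ i (hi : i < t.length), s i = t.get ⟨i, hi⟩ := by
        intro i hi
        rw [hget i hi]
        exact hs i (by omega)
      show (cylIndicator (t ++ [false]) - cylIndicator (t ++ [true])) s = _
      rw [ContinuousMap.sub_apply, cyl_apply t false s hpre, cyl_apply t true s hpre, htlen]
      cases h : s n <;> simp [h]
    have hv0 : haar (some t) s₀ = if s₀ n = false then 1 else -1 :=
      haar_eval s₀ (fun i _ => rfl)
    have hv1 : haar (some t) s₁ = if s₁ n = false then 1 else -1 :=
      haar_eval s₁ (fun i hi => (hmin i hi).symm)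
    set x := lp.single (E := fun _ : Option (List Bool) => ℝ) 1 (some t) (1 : ℝ) with hx
    have hxnorm : ‖x‖ = 1 := by
      have := lp.norm_single (E := fun _ : Option (List Bool) => ℝ) (p := 1)
        (by norm_num) (some t) (1 : ℝ)
      rw [hx, this]; simp
    have happ : (F s₀ - F s₁) x = haar (some t) s₀ - haar (some t) s₁ := by
      simp [hF, hx, hJ (some t)]
    have habs : ‖(F s₀ - F s₁) x‖ = 2 := by
      rw [happ, hv0, hv1]
      cases h0 : s₀ n <;> cases h1 : s₁ n <;> simp_all <;> norm_num
    have hle := (F s₀ - F s₁).le_opNorm x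
    rw [habs, hxnorm, mul_one] at hle
    exact hle
  have hFinj : Function.Injective F := by
    intro a b hab
    by_contra hne
    have := main a b hne
    rw [hab] at this
    simp at this
    linarith
  refine ⟨main, ⟨?_, ?_⟩, ?_⟩
  · intro hcount
    have : Countable (Set.range F) := Set.countable_coe_iff.mpr hcount
    have : Countable (ℕ → Bool) :=
      Function.Injective.countable (f := fun s => (⟨F s, Set.mem_range_self s⟩ : Set.range F))
        (fun a b hab => hFinj (congrArg Subtype.val hab))
    exact not_countable_cantor this
  · rintro x ⟨s₀, rfl⟩ y ⟨s₁, rfl⟩ hxy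
    have hne : s₀ ≠ s₁ := fun h => hxy (by rw [h])
    have := main s₀ s₁ hne
    linarith
  · intro hsep
    have hsub : Set.range F ⊆
        (Set.range fun g : StrongDual ℝ C(ℕ → Bool, ℝ) => g.comp J) := by
      rintro _ ⟨s, rfl⟩
      exact ⟨ContinuousMap.evalCLM ℝ s, rfl⟩
    have hA : IsSeparable (Set.range F) := hsep.mono hsub
    obtain ⟨c, hc, hcc⟩ := hA
    have hcnt : Countable ↥c := Set.countable_coe_iff.mpr hc
    have hu : ∀ a : Set.range F, ∃ b ∈ c, dist a.1 b < 1 := by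
      intro a
      have := hcc a.2
      exact (Metric.mem_closure_iff.mp this) 1 one_pos
    choose u hu_mem hu_dist using hu
    have huinj : Function.Injective (fun a : Set.range F => (⟨u a, hu_mem a⟩ : ↥c)) := by
      intro a b hab
      have heq : u a = u b := congrArg Subtype.val hab
      by_contra hne
      obtain ⟨sa, hsa⟩ := a.2
      obtain ⟨sb, hsb⟩ := b.2
      have hsne : sa ≠ sb := by
        intro h
        apply hne
        apply Subtype.ext
        rw [← hsa, ← hsb, h]
      have h2 : 2 ≤ dist a.1 b.1 := by
        rw [dist_eq_norm, ← hsa, ← hsb]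
        exact main sa sb hsne
      have hlt : dist a.1 b.1 < 2 := by
        calc dist a.1 b.1 ≤ dist a.1 (u a) + dist (u b) b.1 := by
              rw [heq]; exact dist_triangle _ _ _
          _ < 1 + 1 := add_lt_add (hu_dist a) (by rw [dist_comm]; exact hu_dist b)
          _ = 2 := by norm_num
      linarith
    have : Countable ↥(Set.range F) := huinj.countable
    have hcount : (Set.range F).Countable := Set.countable_coe_iff.mp this
    have : Countable (ℕ → Bool) :=
      Function.Injective.countable (f := fun s => (⟨F s, Set.mem_range_self s⟩ : Set.range F))
        (fun a b hab => hFinj (congrArg Subtype.val hab))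
    exact not_countable_cantor this
end

section
/- For every downwards-closed subtree S of Ω, the set S̄ = S ⊔ ∂S equipped with the coarse wedge topology is a compact Hausdorff topological space. -/
open TopologicalSpace

/-- The set `∂S` of infinite branches, as a type. -/
abbrev Branch (S : Set (List ℕ)) : Type := {b : ℕ → ℕ // IsBranch S b}

/-- `S̄ = S ⊔ ∂S`. -/
abbrev TreeCompletion (S : Set (List ℕ)) : Type := ↥S ⊕ Branch S

/-- The extended order `⊑'` comparing an element `s ∈ S` with an element of `S̄`. -/
def extLE (S : Set (List ℕ)) (s : List ℕ) : TreeCompletion S → Prop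
  | Sum.inl t => s <+: (t : List ℕ)
  | Sum.inr b => s = List.ofFn fun i : Fin s.length => (b : ℕ → ℕ) i

/-- The wedge `W_t = {u ∈ S̄ : t ⊑' u}`. -/
def wedge (S : Set (List ℕ)) (t : List ℕ) : Set (TreeCompletion S) :=
  {u | extLE S t u}

/-- The coarse wedge topology on `S̄`, generated by the wedges `W_t`, `t ∈ S`,
together with their complements. -/
def coarseWedgeTopology (S : Set (List ℕ)) : TopologicalSpace (TreeCompletion S) :=
  TopologicalSpace.generateFrom
    ({A | ∃ t ∈ S, A = wedge S t} ∪ {A | ∃ t ∈ S, A = (wedge S t)ᶜ})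

/-!
Send `u ∈ S̄` to the indicator of its set of predecessors `{t ∈ S | t ⊑' u}` in the Cantor cube
`S → Bool`. The wedges and their complements are the preimages of the cylinders `{g | g t = b}`,
so the coarse wedge topology is the topology induced by this injective map. Its image consists of
the indicators of the prefix-closed chains of `S` containing the root: a chain with a longest
element is the set of predecessors of that element, and an unbounded one is the set of initial
segments of a branch. These conditions involve two coordinates at a time, so the image is closed
in the compact Hausdorff Cantor cube, and `S̄` is homeomorphic to it.
-/

open Set Topology

section CantorCube

variable {X ι : Type*}

theorem generateFrom_range_union_range_compl_eq_induced (A : ι → Set X) :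
    generateFrom (range A ∪ range fun i => (A i)ᶜ) =
      induced (fun x i => (A i).boolIndicator x) inferInstance := by
  apply le_antisymm
  · rw [← continuous_iff_le_induced]
    let := generateFrom (range A ∪ range fun i => (A i)ᶜ)
    refine continuous_pi fun i => continuous_discrete_rng.2 fun c => ?_
    cases c
    · rw [preimage_boolIndicator_false]
      exact GenerateOpen.basic _ (Or.inr ⟨i, rfl⟩)
    · rw [preimage_boolIndicator_true]
      exact GenerateOpen.basic _ (Or.inl ⟨i, rfl⟩)
  · refine le_generateFrom ?_
    rintro _ (⟨i, rfl⟩ | ⟨i, rfl⟩)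
    · exact isOpen_induced_iff.2 ⟨(fun g : ι → Bool => g i) ⁻¹' {true},
        (continuous_apply i).isOpen_preimage _ (isOpen_discrete _),
        preimage_boolIndicator_true (A i)⟩
    · exact isOpen_induced_iff.2 ⟨(fun g : ι → Bool => g i) ⁻¹' {false},
        (continuous_apply i).isOpen_preimage _ (isOpen_discrete _),
        preimage_boolIndicator_false (A i)⟩

theorem isClosed_setOf_forall₂_apply {β : Type*} [TopologicalSpace β] [DiscreteTopology β]
    (R : ι → ι → β → β → Prop) : IsClosed {g : ι → β | ∀ i j, R i j (g i) (g j)} := by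
  simp only [ofPred_forall]
  refine isClosed_iInter fun i => isClosed_iInter fun j => ?_
  exact (isClosed_discrete {p : β × β | R i j p.1 p.2}).preimage
    (by fun_prop : Continuous fun g : ι → β => (g i, g j))

end CantorCube

theorem List.prefix_of_getElem_eq {α : Type*} {l₁ l₂ : List α} {b : ℕ → α}
    (h₁ : ∀ i (h : i < l₁.length), l₁[i] = b i) (h₂ : ∀ i (h : i < l₂.length), l₂[i] = b i)
    (hle : l₁.length ≤ l₂.length) : l₁ <+: l₂ :=
  List.prefix_iff_getElem.2 ⟨hle, fun i hi => (h₁ i hi).trans (h₂ i (by omega)).symm⟩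

section TreeCompletion

variable {S : Set (List ℕ)}

theorem extLE_inr_iff {s : List ℕ} {b : Branch S} :
    extLE S s (Sum.inr b) ↔ ∀ i (h : i < s.length), s[i] = b.1 i := by
  refine ⟨fun h i hi => ?_, fun h => List.ext_getElem (by simp) fun i h₁ _ => ?_⟩
  · have h' : s = List.ofFn fun i : Fin s.length => b.1 i := h
    simp [List.getElem_of_eq h' hi, List.getElem_ofFn]
  · simp [List.getElem_ofFn, h i h₁]

theorem extLE_inr_ofFn (b : Branch S) (n : ℕ) :
    extLE S (List.ofFn fun i : Fin n => b.1 i) (Sum.inr b) :=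
  extLE_inr_iff.2 fun i hi => by simp [List.getElem_ofFn]

theorem extLE_nil (u : TreeCompletion S) : extLE S [] u := by
  rcases u with t | b
  · exact List.nil_prefix
  · exact extLE_inr_iff.2 fun i hi => absurd hi (Nat.not_lt_zero i)

theorem extLE_of_prefix {s t : List ℕ} {u : TreeCompletion S} (hst : s <+: t) (ht : extLE S t u) :
    extLE S s u := by
  rcases u with v | b
  · exact hst.trans ht
  · rw [extLE_inr_iff] at ht ⊢
    exact fun i hi => (hst.getElem hi).trans (ht i _)

theorem extLE_total {s t : List ℕ} {u : TreeCompletion S} (hs : extLE S s u) (ht : extLE S t u) :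
    s <+: t ∨ t <+: s := by
  rcases u with v | b
  · exact List.prefix_or_prefix_of_prefix hs ht
  · rw [extLE_inr_iff] at hs ht
    rcases le_total s.length t.length with h | h
    · exact Or.inl (List.prefix_of_getElem_eq hs ht h)
    · exact Or.inr (List.prefix_of_getElem_eq ht hs h)

theorem eq_of_forall_extLE_iff {u v : TreeCompletion S}
    (h : ∀ t ∈ S, extLE S t u ↔ extLE S t v) : u = v := by
  have not_inl_inr (s : ↥S) (b : Branch S)
      (h : ∀ t ∈ S, extLE S t (Sum.inr b) → extLE S t (Sum.inl s)) : False := by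
    have := (h _ (b.2 (s.1.length + 1)) (extLE_inr_ofFn b _)).length_le
    simp at this
  rcases u with s | b <;> rcases v with s' | b'
  · have h₁ := (h s s.2).1 List.prefix_rfl
    have h₂ := (h s' s'.2).2 List.prefix_rfl
    exact congrArg Sum.inl
      (Subtype.ext (h₁.eq_of_length (le_antisymm h₁.length_le h₂.length_le)))
  · exact (not_inl_inr s b' fun t ht => (h t ht).2).elim
  · exact (not_inl_inr s' b fun t ht => (h t ht).1).elim
  · refine congrArg Sum.inr (Subtype.ext (funext fun n => ?_))
    have := extLE_inr_iff.1 ((h _ (b.2 (n + 1))).1 (extLE_inr_ofFn b _)) n (by simp)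
    rwa [List.getElem_ofFn] at this

theorem exists_forall_mem_iff_extLE {C : Set (List ℕ)} (hCS : C ⊆ S) (hnil : [] ∈ C)
    (hlower : ∀ s t, s <+: t → t ∈ C → s ∈ C) (hchain : IsChain (· <+: ·) C) :
    ∃ u : TreeCompletion S, ∀ t, t ∈ C ↔ extLE S t u := by
  by_cases hbdd : ∃ s ∈ C, ∀ t ∈ C, t.length ≤ s.length
  · obtain ⟨s, hs, hmax⟩ := hbdd
    refine ⟨Sum.inl ⟨s, hCS hs⟩, fun t => ⟨fun ht => ?_, fun hts => hlower t s hts hs⟩⟩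
    rcases hchain.total ht hs with hts | hst
    · exact hts
    · exact (hst.eq_of_length (le_antisymm hst.length_le (hmax t ht))).symm ▸ List.prefix_rfl
  · push Not at hbdd
    have hlong (n : ℕ) : ∃ t ∈ C, n < t.length := by
      induction n with
      | zero => simpa using hbdd [] hnil
      | succ n ih =>
        obtain ⟨t, ht, hn⟩ := ih
        obtain ⟨t', ht', hlt⟩ := hbdd t ht
        exact ⟨t', ht', by omega⟩
    choose c hcC hlen using hlong
    let b : ℕ → ℕ := fun n => (c n)[n]'(hlen n)
    have hfollow {t : List ℕ} (ht : t ∈ C) : ∀ i (h : i < t.length), t[i] = b i := fun i hi => by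
      rcases hchain.total ht (hcC i) with h | h
      · exact h.getElem hi
      · exact (h.getElem (hlen i)).symm
    have hmem {t : List ℕ} (ht : ∀ i (h : i < t.length), t[i] = b i) : t ∈ C :=
      hlower t _ (List.prefix_of_getElem_eq ht (hfollow (hcC _)) (hlen t.length).le) (hcC _)
    have hbranch : IsBranch S b := fun n => hCS (hmem fun i hi => by simp [List.getElem_ofFn])
    exact ⟨Sum.inr ⟨b, hbranch⟩, fun t => ⟨fun ht => extLE_inr_iff.2 (hfollow ht),
      fun ht => hmem (extLE_inr_iff.1 ht)⟩⟩

end TreeCompletion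

section WedgeCode

variable {S : Set (List ℕ)}

noncomputable def wedgeCode (S : Set (List ℕ)) (u : TreeCompletion S) : ↥S → Bool :=
  fun t => (wedge S t).boolIndicator u

theorem wedgeCode_eq_true_iff {u : TreeCompletion S} {t : ↥S} :
    wedgeCode S u t = true ↔ extLE S t u :=
  (mem_iff_boolIndicator _ _).symm

theorem coarseWedgeTopology_eq_induced (S : Set (List ℕ)) :
    coarseWedgeTopology S = induced (wedgeCode S) inferInstance := by
  refine (congrArg generateFrom ?_).trans
    (generateFrom_range_union_range_compl_eq_induced fun t : ↥S => wedge S t)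
  ext A
  simp [eq_comm]

theorem wedgeCode_injective : Function.Injective (wedgeCode S) := fun u v h =>
  eq_of_forall_extLE_iff fun t ht => by
    rw [← wedgeCode_eq_true_iff (t := ⟨t, ht⟩), h, wedgeCode_eq_true_iff]

theorem range_wedgeCode (hS : IsDownwardsClosedSubtree S) (hnil : [] ∈ S) :
    range (wedgeCode S) = {g | g ⟨[], hnil⟩ = true} ∩
      {g | ∀ t t' : ↥S, (t.1 <+: t'.1 → g t' = true → g t = true) ∧
        (g t = true → g t' = true → t.1 <+: t'.1 ∨ t'.1 <+: t.1)} := by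
  apply Subset.antisymm
  · rintro _ ⟨u, rfl⟩
    simp only [mem_inter_iff, mem_ofPred_eq, wedgeCode_eq_true_iff]
    exact ⟨extLE_nil u, fun t t' => ⟨extLE_of_prefix, extLE_total⟩⟩
  · rintro g ⟨hroot, hg⟩
    let C : Set (List ℕ) := {t | ∃ h : t ∈ S, g ⟨t, h⟩ = true}
    obtain ⟨u, hu⟩ := exists_forall_mem_iff_extLE (C := C) (fun t ht => ht.1) ⟨hnil, hroot⟩
      (fun s t hst ⟨htS, ht⟩ => ⟨hS t htS s hst, (hg ⟨s, _⟩ ⟨t, htS⟩).1 hst ht⟩)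
      (fun s ⟨hsS, hs⟩ t ⟨htS, ht⟩ _ => (hg ⟨s, hsS⟩ ⟨t, htS⟩).2 hs ht)
    refine ⟨u, funext fun t => Bool.eq_iff_iff.2 ?_⟩
    rw [wedgeCode_eq_true_iff, ← hu]
    exact ⟨fun ⟨_, ht⟩ => ht, fun ht => ⟨t.2, ht⟩⟩

theorem isClosed_range_wedgeCode (hS : IsDownwardsClosedSubtree S) :
    IsClosed (range (wedgeCode S)) := by
  by_cases hnil : [] ∈ S
  · rw [range_wedgeCode hS hnil]
    exact (isClosed_eq (continuous_apply _) continuous_const).inter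
      (isClosed_setOf_forall₂_apply fun (t t' : ↥S) (a a' : Bool) =>
        (t.1 <+: t'.1 → a' = true → a = true) ∧
          (a = true → a' = true → t.1 <+: t'.1 ∨ t'.1 <+: t.1))
  · have : IsEmpty (TreeCompletion S) := ⟨fun
      | .inl s => hnil (hS s s.2 [] List.nil_prefix)
      | .inr b => hnil (by simpa using b.2 0)⟩
    rw [range_eq_empty]
    exact isClosed_empty

end WedgeCode

theorem stmt14 (S : Set (List ℕ)) (hS : IsDownwardsClosedSubtree S) :
    @CompactSpace (TreeCompletion S) (coarseWedgeTopology S) ∧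
      @T2Space (TreeCompletion S) (coarseWedgeTopology S) := by
  let := coarseWedgeTopology S
  have hemb : IsEmbedding (wedgeCode S) :=
    ⟨⟨coarseWedgeTopology_eq_induced S⟩, wedgeCode_injective⟩
  exact ⟨IsClosedEmbedding.compactSpace ⟨hemb, isClosed_range_wedgeCode hS⟩, hemb.t2Space⟩
end

section
/- Let Z be a separable real Banach space, W a real Banach space, R : W → Z a bounded linear operator, K ⊆ Z* an absolutely convex, weak*-compact set, and ε > 0 such that R*(K) contains an uncountable ε-separated subset. Then for every θ > 0 there exists an injective map Ξ from Cantor space (ℕ → Bool with the product topology) into K that is continuous into the weak* topology of Z* (hence, Cantor space being compact, a homeomorphism onto its image with the weak* topology) and satisfies ‖R*(Ξ s) − R*(Ξ s')‖ > ε/(2+θ) for all distinct s, s' in Cantor space; in particular {Ξ s : s ∈ ℕ → Bool} is a norm-discrete, weak*-homeomorphic copy of the Cantor set inside K. -/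
open TopologicalSpace Filter Topology

theorem cantor_scheme_aux {M : Type*} [MetricSpace M] [CompactSpace M]
    [SecondCountableTopology M]
    {Y : Type*} [SeminormedAddCommGroup Y]
    (F : M → Y) (D : Set M) (hD : ¬ D.Countable) {ε : ℝ} (hε : 0 < ε)
    (S : Set (M → ℝ)) (hScont : ∀ f ∈ S, Continuous f)
    (hSnorm : ∀ f ∈ S, ∀ u v : M, f u - f v ≤ ‖F u - F v‖)
    (hsep : ∀ x ∈ D, ∀ y ∈ D, x ≠ y → ∃ f ∈ S, ε < f x - f y) :
    ∃ Ξ : (ℕ → Bool) → M, Continuous Ξ ∧ Function.Injective Ξ ∧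
      ∀ s s' : ℕ → Bool, s ≠ s' → ε / 2 ≤ ‖F (Ξ s) - F (Ξ s')‖ := by
  classical
  -- condensation points
  set D₀ : Set M := {x | x ∈ D ∧ ∀ U ∈ 𝓝 x, ¬ (D ∩ U).Countable} with hD₀def
  have hD₀sub : D₀ ⊆ D := fun x hx => hx.1
  have hdiff : (D \ D₀).Countable := by
    have hsub : (D \ D₀) ⊆ ⋃ V ∈ {V ∈ countableBasis M | (D ∩ V).Countable}, D ∩ V := by
      intro x hx
      obtain ⟨hxD, hxn⟩ := hx
      have : ∃ U ∈ 𝓝 x, (D ∩ U).Countable := by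
        by_contra h
        push_neg at h
        exact hxn ⟨hxD, h⟩
      obtain ⟨U, hU, hUc⟩ := this
      obtain ⟨V, hVb, hxV, hVU⟩ := (isBasis_countableBasis M).mem_nhds_iff.1 hU
      exact Set.mem_biUnion ⟨hVb, hUc.mono (Set.inter_subset_inter_right _ hVU)⟩ ⟨hxD, hxV⟩
    exact Set.Countable.mono hsub
      (Set.Countable.biUnion ((countable_countableBasis M).mono (Set.sep_subset _ _))
        (fun V hV => hV.2))
  have hD₀unc : ¬ D₀.Countable := by
    intro h
    exact hD ((h.union hdiff).mono (fun x hx => by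
      by_cases hx0 : x ∈ D₀
      · exact Or.inl hx0
      · exact Or.inr ⟨hx, hx0⟩))
  have hkey : ∀ x ∈ D₀, ∀ U ∈ 𝓝 x, ¬ (D₀ ∩ U).Countable := by
    intro x hx U hU h
    refine hx.2 U hU ?_
    have hss : D ∩ U ⊆ (D₀ ∩ U) ∪ (D \ D₀) := by
      intro y hy
      by_cases hy0 : y ∈ D₀
      · exact Or.inl ⟨hy0, hy.2⟩
      · exact Or.inr ⟨hy.1, hy0⟩
    exact (h.union hdiff).mono hss
  -- the splitting step
  have step : ∀ (p : M) (U : Set M) (r : ℝ), p ∈ D₀ → p ∈ U → IsOpen U → 0 < r →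
      ∃ (q : Bool → M) (V : Bool → Set M) (f : M → ℝ), f ∈ S ∧
        (∀ b, q b ∈ D₀ ∧ q b ∈ V b ∧ IsOpen (V b) ∧ V b ⊆ U ∧ V b ⊆ Metric.ball (q b) r) ∧
        ∀ ζ ∈ closure (V true), ∀ ξ ∈ closure (V false), ε / 2 ≤ f ζ - f ξ := by
    intro p U r hp hpU hUo hr
    have hunc : ¬ (D₀ ∩ U).Countable := hkey p hp U (hUo.mem_nhds hpU)
    have hnt : (D₀ ∩ U).Nontrivial := by
      rcases Set.eq_empty_or_nonempty (D₀ ∩ U) with h | h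
      · exact absurd (h ▸ Set.countable_empty) hunc
      · rcases h with ⟨x, hx⟩
        rcases Set.eq_singleton_or_nontrivial hx with h | h
        · exact absurd (h ▸ Set.countable_singleton x) hunc
        · exact h
    obtain ⟨x, hx, y, hy, hxy⟩ := hnt
    obtain ⟨f, hfS, hf⟩ := hsep x (hD₀sub hx.1) y (hD₀sub hy.1) hxy
    have hfc := hScont f hfS
    refine ⟨fun b => if b then x else y,
      fun b => if b then U ∩ Metric.ball x r ∩ f ⁻¹' Set.Ioi (f x - ε / 4)
        else U ∩ Metric.ball y r ∩ f ⁻¹' Set.Iio (f y + ε / 4), f, hfS, ?_, ?_⟩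
    · intro b
      cases b
      · simp only [if_false]
        refine ⟨hy.1, ⟨⟨hy.2, Metric.mem_ball_self hr⟩, by simp; linarith⟩,
          ((hUo.inter Metric.isOpen_ball).inter (isOpen_Iio.preimage hfc)), ?_, ?_⟩
        · exact fun z hz => hz.1.1
        · exact fun z hz => hz.1.2
      · simp only [if_true]
        refine ⟨hx.1, ⟨⟨hx.2, Metric.mem_ball_self hr⟩, by simp; linarith⟩,
          ((hUo.inter Metric.isOpen_ball).inter (isOpen_Ioi.preimage hfc)), ?_, ?_⟩
        · exact fun z hz => hz.1.1
        · exact fun z hz => hz.1.2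
    · intro ζ hζ ξ hξ
      have h1 : f ζ ≥ f x - ε / 4 := by
        have hcl : IsClosed (f ⁻¹' Set.Ici (f x - ε / 4)) := isClosed_Ici.preimage hfc
        have hsub : closure (U ∩ Metric.ball x r ∩ f ⁻¹' Set.Ioi (f x - ε / 4))
            ⊆ f ⁻¹' Set.Ici (f x - ε / 4) :=
          closure_minimal (fun z hz => show f x - ε / 4 ≤ f z from le_of_lt hz.2) hcl
        exact hsub (by simpa using hζ)
      have h2 : f ξ ≤ f y + ε / 4 := by
        have hcl : IsClosed (f ⁻¹' Set.Iic (f y + ε / 4)) := isClosed_Iic.preimage hfc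
        have hsub : closure (U ∩ Metric.ball y r ∩ f ⁻¹' Set.Iio (f y + ε / 4))
            ⊆ f ⁻¹' Set.Iic (f y + ε / 4) :=
          closure_minimal (fun z hz => show f z ≤ f y + ε / 4 from le_of_lt hz.2) hcl
        exact hsub (by simpa using hξ)
      linarith
  -- unconditional step for recursion
  have step' : ∀ (pU : M × Set M) (r : ℝ),
      ∃ (q : Bool → M) (V : Bool → Set M) (f : M → ℝ),
        pU.1 ∈ D₀ → pU.1 ∈ pU.2 → IsOpen pU.2 → 0 < r →
          (f ∈ S ∧
          (∀ b, q b ∈ D₀ ∧ q b ∈ V b ∧ IsOpen (V b) ∧ V b ⊆ pU.2 ∧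
            V b ⊆ Metric.ball (q b) r) ∧
          ∀ ζ ∈ closure (V true), ∀ ξ ∈ closure (V false), ε / 2 ≤ f ζ - f ξ) := by
    intro pU r
    by_cases h : pU.1 ∈ D₀ ∧ pU.1 ∈ pU.2 ∧ IsOpen pU.2 ∧ 0 < r
    · obtain ⟨q, V, f, h1, h2, h3⟩ := step pU.1 pU.2 r h.1 h.2.1 h.2.2.1 h.2.2.2
      exact ⟨q, V, f, fun _ _ _ _ => ⟨h1, h2, h3⟩⟩
    · exact ⟨fun _ => pU.1, fun _ => pU.2, fun _ => 0,
        fun h1 h2 h3 h4 => absurd ⟨h1, h2, h3, h4⟩ h⟩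
  choose q V f hstep using step'
  have hD₀ne : D₀.Nonempty := Set.nonempty_iff_ne_empty.2
    (fun h => hD₀unc (h ▸ Set.countable_empty))
  obtain ⟨p₀, hp₀⟩ := hD₀ne
  -- the scheme
  obtain ⟨G, hGnil, hGcons⟩ : ∃ G : List Bool → M × Set M, G [] = (p₀, Set.univ) ∧
      ∀ b t, G (b :: t) =
        (q (G t) ((1/2 : ℝ) ^ (t.length + 1)) b, V (G t) ((1/2 : ℝ) ^ (t.length + 1)) b) :=
    ⟨fun l => List.rec (p₀, Set.univ)
      (fun b t ih => (q ih ((1/2 : ℝ) ^ (t.length + 1)) b,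
        V ih ((1/2 : ℝ) ^ (t.length + 1)) b)) l,
      rfl, fun b t => rfl⟩
  have hInv : ∀ t : List Bool, (G t).1 ∈ D₀ ∧ (G t).1 ∈ (G t).2 ∧ IsOpen (G t).2 := by
    intro t
    induction t with
    | nil => rw [hGnil]; exact ⟨hp₀, Set.mem_univ _, isOpen_univ⟩
    | cons b t ih =>
      have h := (hstep (G t) ((1/2 : ℝ) ^ (t.length + 1)) ih.1 ih.2.1 ih.2.2
        (by positivity)).2.1 b
      rw [hGcons]
      exact ⟨h.1, h.2.1, h.2.2.1⟩
  have hstepG : ∀ t : List Bool,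
      f (G t) ((1/2:ℝ)^(t.length+1)) ∈ S ∧
      (∀ b, (G (b :: t)).1 ∈ D₀ ∧ (G (b :: t)).1 ∈ (G (b :: t)).2 ∧ IsOpen (G (b :: t)).2 ∧
        (G (b :: t)).2 ⊆ (G t).2 ∧
        (G (b :: t)).2 ⊆ Metric.ball (G (b :: t)).1 ((1/2:ℝ)^(t.length+1))) ∧
      ∀ ζ ∈ closure (G (true :: t)).2, ∀ ξ ∈ closure (G (false :: t)).2,
        ε / 2 ≤ f (G t) ((1/2:ℝ)^(t.length+1)) ζ - f (G t) ((1/2:ℝ)^(t.length+1)) ξ := by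
    intro t
    obtain ⟨h1, h2, h3⟩ := hInv t
    have h := hstep (G t) ((1/2:ℝ)^(t.length+1)) h1 h2 h3 (by positivity)
    simp only [hGcons]
    exact h
  -- prefixes
  obtain ⟨pre, hpre0, hpreS⟩ : ∃ pre : (ℕ → Bool) → ℕ → List Bool,
      (∀ s, pre s 0 = []) ∧ ∀ s n, pre s (n + 1) = s n :: pre s n :=
    ⟨fun s n => Nat.rec [] (fun m ih => s m :: ih) n, fun s => rfl, fun s n => rfl⟩
  have hlen : ∀ s n, (pre s n).length = n := by
    intro s n
    induction n with
    | zero => rw [hpre0]; rfl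
    | succ n ih => rw [hpreS]; simp [ih]
  have hnest : ∀ s n m, n ≤ m → (G (pre s m)).2 ⊆ (G (pre s n)).2 := by
    intro s n m hnm
    induction m, hnm using Nat.le_induction with
    | base => exact subset_rfl
    | succ m hm ih =>
      refine subset_trans ?_ ih
      rw [hpreS]
      exact ((hstepG (pre s m)).2.1 (s m)).2.2.2.1
  have hmemU : ∀ s n m, n ≤ m → (G (pre s m)).1 ∈ (G (pre s n)).2 :=
    fun s n m hnm => hnest s n m hnm (hInv (pre s m)).2.1
  have hball : ∀ s n, (G (pre s (n+1))).2 ⊆ Metric.ball (G (pre s (n+1))).1 ((1/2:ℝ)^(n+1)) := by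
    intro s n
    have h := ((hstepG (pre s n)).2.1 (s n)).2.2.2.2
    rw [hlen] at h
    rw [hpreS]
    exact h
  have hlim : ∀ s : ℕ → Bool, ∃ a : M, Tendsto (fun n => (G (pre s (n+1))).1) atTop (𝓝 a) := by
    intro s
    have hcauchy : CauchySeq (fun n => (G (pre s (n+1))).1) := by
      apply cauchySeq_of_le_tendsto_0' (fun n => (1/2:ℝ)^(n+1))
      · intro n m hnm
        have h1 : (G (pre s (m+1))).1 ∈ (G (pre s (n+1))).2 := hmemU s (n+1) (m+1) (by omega)
        have h2 := hball s n h1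
        rw [dist_comm]
        exact le_of_lt (Metric.mem_ball.1 h2)
      · exact (tendsto_pow_atTop_nhds_zero_of_lt_one (by norm_num) (by norm_num)).comp
          (tendsto_add_atTop_nat 1)
    exact cauchySeq_tendsto_of_complete hcauchy
  choose Ξ hΞ using hlim
  have hclos : ∀ s n, Ξ s ∈ closure (G (pre s n)).2 := by
    intro s n
    refine mem_closure_of_tendsto (hΞ s) ?_
    filter_upwards [eventually_ge_atTop n] with m hm
    exact hmemU s n (m+1) (by omega)
  have hdist : ∀ s n, dist (Ξ s) ((G (pre s (n+1))).1) ≤ (1/2:ℝ)^(n+1) := by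
    intro s n
    have h1 : closure (G (pre s (n+1))).2
        ⊆ Metric.closedBall ((G (pre s (n+1))).1) ((1/2:ℝ)^(n+1)) :=
      closure_minimal (subset_trans (hball s n) Metric.ball_subset_closedBall)
        Metric.isClosed_closedBall
    exact Metric.mem_closedBall.1 (h1 (hclos s (n+1)))
  have hpre_eq : ∀ s s' : ℕ → Bool, ∀ n, (∀ k, k < n → s k = s' k) → pre s n = pre s' n := by
    intro s s' n h
    induction n with
    | zero => rw [hpre0, hpre0]
    | succ n ih => rw [hpreS, hpreS, h n (by omega), ih (fun k hk => h k (by omega))]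
  have hsep2 : ∀ s s' : ℕ → Bool, s ≠ s' → ε / 2 ≤ ‖F (Ξ s) - F (Ξ s')‖ := by
    intro s s' hne
    have hex : ∃ n, s n ≠ s' n := by
      by_contra h
      push_neg at h
      exact hne (funext h)
    have hndiff : s (Nat.find hex) ≠ s' (Nat.find hex) := Nat.find_spec hex
    set n := Nat.find hex with hn
    have hagree : ∀ k, k < n → s k = s' k := fun k hk => not_not.1 (Nat.find_min hex hk)
    have hpp : pre s n = pre s' n := hpre_eq s s' n hagree
    have hsept := (hstepG (pre s n)).2.2
    have hfS' := (hstepG (pre s n)).1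
    have hΞs : Ξ s ∈ closure (G (s n :: pre s n)).2 := by
      have h := hclos s (n+1)
      rwa [hpreS] at h
    have hΞs' : Ξ s' ∈ closure (G (s' n :: pre s n)).2 := by
      have h := hclos s' (n+1)
      rw [hpreS, ← hpp] at h
      exact h
    cases hb : s n with
    | false =>
      have hb' : s' n = true := by
        cases hb2 : s' n
        · exact absurd (hb.trans hb2.symm) hndiff
        · rfl
      rw [hb] at hΞs
      rw [hb'] at hΞs'
      have h := hsept (Ξ s') hΞs' (Ξ s) hΞs
      calc ε/2 ≤ _ := h
        _ ≤ ‖F (Ξ s') - F (Ξ s)‖ := hSnorm _ hfS' _ _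
        _ = ‖F (Ξ s) - F (Ξ s')‖ := norm_sub_rev _ _
    | true =>
      have hb' : s' n = false := by
        cases hb2 : s' n
        · rfl
        · exact absurd (hb.trans hb2.symm) hndiff
      rw [hb] at hΞs
      rw [hb'] at hΞs'
      have h := hsept (Ξ s) hΞs (Ξ s') hΞs'
      exact le_trans h (hSnorm _ hfS' _ _)
  have hinj : Function.Injective Ξ := by
    intro s s' h
    by_contra hne
    have h2 := hsep2 s s' hne
    rw [h, sub_self, norm_zero] at h2
    linarith
  have hcont : Continuous Ξ := by
    rw [continuous_iff_continuousAt]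
    intro s
    rw [ContinuousAt, Metric.tendsto_nhds]
    intro δ hδ
    obtain ⟨n, hn⟩ := exists_pow_lt_of_lt_one hδ (by norm_num : (1/2:ℝ) < 1)
    have hev : ∀ᶠ s' : ℕ → Bool in 𝓝 s, ∀ k ∈ Finset.range (n+1), s' k = s k := by
      rw [Filter.eventually_all_finset]
      intro k _
      have h1 : ∀ᶠ b : Bool in 𝓝 (s k), b = s k := by
        filter_upwards [IsOpen.mem_nhds (isOpen_discrete {s k}) (Set.mem_singleton _)] with b hb
        exact hb
      exact (continuous_apply k).continuousAt.eventually h1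
    filter_upwards [hev] with s' hs'
    have heq : pre s' (n+1) = pre s (n+1) :=
      hpre_eq s' s (n+1) (fun k hk => hs' k (Finset.mem_range.2 hk))
    have d1 := hdist s' n
    have d2 := hdist s n
    rw [heq] at d1
    calc dist (Ξ s') (Ξ s)
        ≤ dist (Ξ s') ((G (pre s (n+1))).1) + dist (Ξ s) ((G (pre s (n+1))).1) :=
          dist_triangle_right _ _ _
      _ ≤ (1/2:ℝ)^(n+1) + (1/2:ℝ)^(n+1) := add_le_add d1 d2
      _ = (1/2:ℝ)^n := by ring
      _ < δ := hn
  exact ⟨Ξ, hcont, hinj, hsep2⟩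

theorem stmt16 (W Z : Type*) [NormedAddCommGroup W] [NormedSpace ℝ W] [CompleteSpace W]
    [NormedAddCommGroup Z] [NormedSpace ℝ Z] [CompleteSpace Z] [SeparableSpace Z]
    (R : W →L[ℝ] Z) (K : Set (StrongDual ℝ Z)) (ε : ℝ) (hε : 0 < ε)
    (hKconv : Convex ℝ K) (hKbal : Balanced ℝ K)
    (hKcpt : IsCompact (StrongDual.toWeakDual '' K : Set (WeakDual ℝ Z)))
    (hKsep : ∃ A ⊆ (fun z' : StrongDual ℝ Z => z'.comp R) '' K,
      ¬ A.Countable ∧ ∀ x ∈ A, ∀ y ∈ A, x ≠ y → ε < ‖x - y‖)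
    (θ : ℝ) (hθ : 0 < θ) :
    ∃ Ξ : (ℕ → Bool) → StrongDual ℝ Z,
      Function.Injective Ξ ∧ (∀ s, Ξ s ∈ K) ∧
      Continuous (fun s => StrongDual.toWeakDual (Ξ s)) ∧
      ∀ s s' : ℕ → Bool, s ≠ s' →
        ε / (2 + θ) < ‖(Ξ s).comp R - (Ξ s').comp R‖ := by
  classical
  obtain ⟨A, hAsub, hAunc, hAsep⟩ := hKsep
  choose φ hφK hφT using fun (a : StrongDual ℝ W) (ha : a ∈ A) => hAsub ha
  set Kw : Set (WeakDual ℝ Z) := StrongDual.toWeakDual '' K with hKw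
  haveI hcs : CompactSpace Kw := isCompact_iff_compactSpace.1 hKcpt
  obtain ⟨z, hz⟩ := TopologicalSpace.exists_dense_seq Z
  have he_cont : Continuous (fun (x : Kw) (n : ℕ) => (x : WeakDual ℝ Z) (z n)) := by
    apply continuous_pi
    intro n
    exact (WeakDual.eval_continuous (z n)).comp continuous_subtype_val
  have he_inj : Function.Injective (fun (x : Kw) (n : ℕ) => (x : WeakDual ℝ Z) (z n)) := by
    intro x y hxy
    apply Subtype.ext
    have hfun : ((x : WeakDual ℝ Z) : Z → ℝ) = ((y : WeakDual ℝ Z) : Z → ℝ) := by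
      apply hz.equalizer (map_continuous _) (map_continuous _)
      funext n
      exact congrFun hxy n
    exact DFunLike.coe_injective hfun
  have hemb := (he_cont.isClosedEmbedding he_inj).toIsEmbedding
  haveI hm : MetrizableSpace Kw := hemb.metrizableSpace
  haveI hsc : SecondCountableTopology Kw := hemb.secondCountableTopology
  letI : MetricSpace Kw := TopologicalSpace.metrizableSpaceMetric Kw
  haveI : CompactSpace Kw := hcs
  haveI : SecondCountableTopology Kw := hsc
  set D : Set Kw := {x | ∃ a, ∃ ha : a ∈ A,
    (x : WeakDual ℝ Z) = StrongDual.toWeakDual (φ a ha)} with hD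
  set F : Kw → StrongDual ℝ W :=
    fun x => (WeakDual.toStrongDual (x : WeakDual ℝ Z)).comp R with hF
  have hFval : ∀ (a) (ha : a ∈ A) (x : Kw),
      (x : WeakDual ℝ Z) = StrongDual.toWeakDual (φ a ha) → F x = a := by
    intro a ha x hx
    rw [hF]
    simp only [hx]
    exact hφT a ha
  have hDunc : ¬ D.Countable := by
    intro hc
    apply hAunc
    have hsub : A ⊆ F '' D := by
      intro a ha
      have hmem : StrongDual.toWeakDual (φ a ha) ∈ Kw :=
        Set.mem_image_of_mem _ (hφK a ha)
      exact ⟨⟨_, hmem⟩, ⟨a, ha, rfl⟩, hFval a ha _ rfl⟩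
    exact Set.Countable.mono hsub (hc.image _)
  set S : Set (Kw → ℝ) := {f : Kw → ℝ | ∃ w : W, ‖w‖ ≤ 1 ∧ f = fun x : Kw => (x : WeakDual ℝ Z) (R w)} with hS
  have hScont : ∀ f ∈ S, Continuous f := by
    rintro f ⟨w, hw, rfl⟩
    exact (WeakDual.eval_continuous (R w)).comp continuous_subtype_val
  have happ : ∀ (w : W) (u v : Kw),
      (u : WeakDual ℝ Z) (R w) - (v : WeakDual ℝ Z) (R w) = (F u - F v) w := by
    intro w u v
    simp [hF]
  have hSnorm : ∀ f ∈ S, ∀ u v : Kw, f u - f v ≤ ‖F u - F v‖ := by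
    rintro f ⟨w, hw, rfl⟩ u v
    rw [happ w u v]
    calc (F u - F v) w ≤ ‖(F u - F v) w‖ := le_abs_self _
      _ ≤ ‖F u - F v‖ * ‖w‖ := ContinuousLinearMap.le_opNorm _ _
      _ ≤ ‖F u - F v‖ * 1 := by
          exact mul_le_mul_of_nonneg_left hw (norm_nonneg _)
      _ = ‖F u - F v‖ := mul_one _
  have hεsep : ∀ x ∈ D, ∀ y ∈ D, x ≠ y → ∃ f ∈ S, ε < f x - f y := by
    rintro x ⟨a, ha, hxa⟩ y ⟨b, hb, hyb⟩ hxy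
    have hab : a ≠ b := by
      rintro rfl
      exact hxy (Subtype.ext (hxa.trans hyb.symm))
    have hFx : F x = a := hFval a ha x hxa
    have hFy : F y = b := hFval b hb y hyb
    have hlt : ε < ‖F x - F y‖ := by
      rw [hFx, hFy]
      exact hAsep a ha b hb hab
    obtain ⟨w, hw1, hw2⟩ := (F x - F y).exists_lt_apply_of_lt_opNorm hlt
    rw [Real.norm_eq_abs] at hw2
    rcases le_or_gt 0 ((F x - F y) w) with hpos | hneg
    · refine ⟨fun x' : Kw => (x' : WeakDual ℝ Z) (R w), ⟨w, le_of_lt hw1, rfl⟩, ?_⟩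
      rw [happ w x y]
      rwa [abs_of_nonneg hpos] at hw2
    · refine ⟨fun x' : Kw => (x' : WeakDual ℝ Z) (R (-w)),
        ⟨-w, by rw [norm_neg]; exact le_of_lt hw1, rfl⟩, ?_⟩
      rw [happ (-w) x y, map_neg]
      rw [abs_of_neg hneg] at hw2
      linarith
  obtain ⟨Ξm, hΞcont, hΞinj, hΞsep⟩ := cantor_scheme_aux F D hDunc hε S hScont hSnorm hεsep
  refine ⟨fun s => WeakDual.toStrongDual ((Ξm s : Kw) : WeakDual ℝ Z), ?_, ?_, ?_, ?_⟩
  · intro s s' h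
    apply hΞinj
    apply Subtype.ext
    exact WeakDual.toStrongDual.injective h
  · intro s
    obtain ⟨z', hz'K, hz'⟩ := (Ξm s).2
    show WeakDual.toStrongDual ((Ξm s : Kw) : WeakDual ℝ Z) ∈ K
    rw [← hz']
    exact hz'K
  · have hcv : Continuous (fun s => ((Ξm s : Kw) : WeakDual ℝ Z)) :=
      continuous_subtype_val.comp hΞcont
    exact hcv
  · intro s s' hss
    have h := hΞsep s s' hss
    have hlt : ε / (2 + θ) < ε / 2 := by
      apply div_lt_div_of_pos_left hε (by norm_num) (by linarith)
    calc ε/(2+θ) < ε/2 := hlt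
      _ ≤ ‖F (Ξm s) - F (Ξm s')‖ := h
      _ = _ := rfl
end
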